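/- Let R be a Γ-graded ring, γ a morphism of Γ, and a ∈ R_γ. The following are equivalent: (1) a ∈ rad^gr(R_R); (2) aR is gr-superfluous in the right R-module R; (3) 1_{r(γ)} − ax is right invertible in the ring R_{r(γ)} for every x ∈ R_{γ⁻¹}; (4) 1_{r(γ)} − ax is invertible in R_{r(γ)} for every x ∈ R_{γ⁻¹}; (5) Sa = 0 for every gr-simple Γ-graded right R-module S. -/

import Mathlib

open CategoryTheory

universe u

instance addSubgroupNormalOfComm {M : Type*} [AddCommGroup M] (N : AddSubgroup M) :
    N.Normal := ⟨fun n hn g => by simpa [add_comm] using hn⟩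

variable {Γ : Type u} [Groupoid.{u} Γ]

/-- The morphisms of the groupoid `Γ`, bundled together with their endpoints.
For `γ : GrIdx Γ`, the morphism `γ.2.2 : γ.1 ⟶ γ.2.1` has domain `d(γ) = γ.1`
and range `r(γ) = γ.2.1`. -/
abbrev GrIdx (Γ : Type u) [Groupoid.{u} Γ] : Type u := Σ e f : Γ, e ⟶ f

/-- The data of a `Γ`-grading, a multiplication, and local units `1_e` on an
additive group `R`. -/
structure GRingData (Γ : Type u) [Groupoid.{u} Γ] (R : Type u) [AddCommGroup R] :
    Type u where
  mul : R → R → R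
  component : ∀ {e f : Γ}, (e ⟶ f) → AddSubgroup R
  one : Γ → R

/-- The data of a right scalar multiplication by `R` and a `Γ`-grading on an
additive group `M`. -/
structure GModData (Γ : Type u) [Groupoid.{u} Γ] (R : Type u) (M : Type u)
    [AddCommGroup M] : Type u where
  smul : M → R → M
  component : ∀ {e f : Γ}, (e ⟶ f) → AddSubgroup M

namespace GRingData

variable {R : Type u} [AddCommGroup R]

/-- `𝒜` makes `R` an (object unital) `Γ`-graded ring: `R` is an associative ring,
`R = ⊕_γ R_γ`, `R_γ R_δ ⊆ R_{γδ}` when `γδ` is defined and `R_γ R_δ = 0` otherwise,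
each `R_e` (`e ∈ Γ₀`) is unital with identity `1_e`, and
`1_{r(γ)} a = a 1_{d(γ)} = a` for all `a ∈ R_γ`. -/
structure IsObjectUnital (𝒜 : GRingData Γ R) : Prop where
  mul_assoc : ∀ a b c : R, 𝒜.mul (𝒜.mul a b) c = 𝒜.mul a (𝒜.mul b c)
  left_distrib : ∀ a b c : R, 𝒜.mul a (b + c) = 𝒜.mul a b + 𝒜.mul a c
  right_distrib : ∀ a b c : R, 𝒜.mul (a + b) c = 𝒜.mul a c + 𝒜.mul b c
  decompose : ∀ x : R, ∃ (s : Finset (GrIdx Γ)) (cf : GrIdx Γ → R),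
      (∀ γ ∈ s, cf γ ∈ 𝒜.component γ.2.2) ∧ x = ∑ γ ∈ s, cf γ
  independent : ∀ (s : Finset (GrIdx Γ)) (cf : GrIdx Γ → R),
      (∀ γ ∈ s, cf γ ∈ 𝒜.component γ.2.2) → ∑ γ ∈ s, cf γ = 0 → ∀ γ ∈ s, cf γ = 0
  mul_mem : ∀ {e f g : Γ} (γ : e ⟶ f) (δ : g ⟶ e) {a b : R},
      a ∈ 𝒜.component γ → b ∈ 𝒜.component δ → 𝒜.mul a b ∈ 𝒜.component (δ ≫ γ)
  mul_eq_zero : ∀ {e f g h : Γ} (γ : e ⟶ f) (δ : g ⟶ h) {a b : R},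
      h ≠ e → a ∈ 𝒜.component γ → b ∈ 𝒜.component δ → 𝒜.mul a b = 0
  one_mem : ∀ e : Γ, 𝒜.one e ∈ 𝒜.component (𝟙 e)
  one_mul : ∀ {e f : Γ} (γ : e ⟶ f) {a : R}, a ∈ 𝒜.component γ → 𝒜.mul (𝒜.one f) a = a
  mul_one : ∀ {e f : Γ} (γ : e ⟶ f) {a : R}, a ∈ 𝒜.component γ → 𝒜.mul a (𝒜.one e) = a

/-- `R` regarded as a (`Γ`-graded) right module over itself. -/
def toMod (𝒜 : GRingData Γ R) : GModData Γ R R where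
  smul := 𝒜.mul
  component := fun γ => 𝒜.component γ

end GRingData

namespace GModData

variable {R : Type u} {M : Type u} {M' : Type u} [AddCommGroup M] [AddCommGroup M']

/-- `ℳ` makes `M` a unital `Γ`-graded right module over the `Γ`-graded ring `𝒜`:
`M` is a right `R`-module, `M = ⊕_γ M_γ`, `M_σ R_τ ⊆ M_{στ}` when `στ` is defined
and `M_σ R_τ = 0` otherwise, and `m 1_{d(σ)} = m` for all `m ∈ M_σ`. -/
structure IsGraded [AddCommGroup R] (𝒜 : GRingData Γ R) (ℳ : GModData Γ R M) :
    Prop where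
  add_smul : ∀ (m n : M) (a : R), ℳ.smul (m + n) a = ℳ.smul m a + ℳ.smul n a
  smul_add : ∀ (m : M) (a b : R), ℳ.smul m (a + b) = ℳ.smul m a + ℳ.smul m b
  smul_mul : ∀ (m : M) (a b : R), ℳ.smul m (𝒜.mul a b) = ℳ.smul (ℳ.smul m a) b
  decompose : ∀ x : M, ∃ (s : Finset (GrIdx Γ)) (cf : GrIdx Γ → M),
      (∀ γ ∈ s, cf γ ∈ ℳ.component γ.2.2) ∧ x = ∑ γ ∈ s, cf γ
  independent : ∀ (s : Finset (GrIdx Γ)) (cf : GrIdx Γ → M),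
      (∀ γ ∈ s, cf γ ∈ ℳ.component γ.2.2) → ∑ γ ∈ s, cf γ = 0 → ∀ γ ∈ s, cf γ = 0
  smul_mem : ∀ {e f g : Γ} (σ : e ⟶ f) (τ : g ⟶ e) {m : M} {a : R},
      m ∈ ℳ.component σ → a ∈ 𝒜.component τ → ℳ.smul m a ∈ ℳ.component (τ ≫ σ)
  smul_eq_zero : ∀ {e f g h : Γ} (σ : e ⟶ f) (τ : g ⟶ h) {m : M} {a : R},
      h ≠ e → m ∈ ℳ.component σ → a ∈ 𝒜.component τ → ℳ.smul m a = 0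
  smul_one : ∀ {e f : Γ} (σ : e ⟶ f) {m : M}, m ∈ ℳ.component σ →
      ℳ.smul m (𝒜.one e) = m

/-- An element of `M` is homogeneous if it belongs to some homogeneous component. -/
def IsHomogeneous (ℳ : GModData Γ R M) (m : M) : Prop :=
  ∃ (e f : Γ) (γ : e ⟶ f), m ∈ ℳ.component γ

/-- `N` is a graded submodule of `M`: a submodule (subgroup closed under the right
`R`-action) generated by its homogeneous elements, i.e. `N = ⊕_γ (N ∩ M_γ)`. -/
def IsGrSub (ℳ : GModData Γ R M) (N : AddSubgroup M) : Prop :=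
  (∀ m ∈ N, ∀ a : R, ℳ.smul m a ∈ N) ∧
  ∀ n ∈ N, n ∈ AddSubgroup.closure {x : M | x ∈ N ∧ ℳ.IsHomogeneous x}

/-- `M` is gr-noetherian: there is no strictly increasing infinite chain of graded
submodules. -/
def GrNoetherian (ℳ : GModData Γ R M) : Prop :=
  ¬ ∃ c : ℕ → AddSubgroup M, (∀ n, ℳ.IsGrSub (c n)) ∧ ∀ n, c n < c (n + 1)

/-- `M` is gr-artinian: there is no strictly decreasing infinite chain of graded
submodules. -/
def GrArtinian (ℳ : GModData Γ R M) : Prop :=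
  ¬ ∃ c : ℕ → AddSubgroup M, (∀ n, ℳ.IsGrSub (c n)) ∧ ∀ n, c (n + 1) < c n

/-- The `R`-submodule of `M` generated by a set `X`. -/
def rClosure (ℳ : GModData Γ R M) (X : Set M) : AddSubgroup M :=
  sInf {N : AddSubgroup M | X ⊆ N ∧ ∀ m ∈ N, ∀ a : R, ℳ.smul m a ∈ N}

/-- `M` is finitely generated (as a right `R`-module). -/
def FG (ℳ : GModData Γ R M) : Prop := ∃ s : Finset M, ℳ.rClosure ↑s = ⊤

/-- The submodule `N` of `M` is finitely generated. -/
def FGSub (ℳ : GModData Γ R M) (N : AddSubgroup M) : Prop :=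
  ∃ s : Finset M, ↑s ⊆ (N : Set M) ∧ ℳ.rClosure ↑s = N

/-- `M` is finitely gr-cogenerated: every family of graded submodules with zero
intersection has a finite subfamily with zero intersection. -/
def FinGrCogenerated (ℳ : GModData Γ R M) : Prop :=
  ∀ S : Set (AddSubgroup M), (∀ N ∈ S, ℳ.IsGrSub N) → sInf S = ⊥ →
    ∃ t : Finset (AddSubgroup M), ↑t ⊆ S ∧ t.inf id = ⊥

/-- The quotient module `M/N`, with grading `(M/N)_γ = (M_γ + N)/N`. -/
noncomputable def quot (ℳ : GModData Γ R M) (N : AddSubgroup M) :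
    GModData Γ R (M ⧸ N) where
  smul x a := QuotientAddGroup.mk (ℳ.smul (Quotient.out x) a)
  component := fun γ => (ℳ.component γ).map (QuotientAddGroup.mk' N)

open scoped Classical in
/-- The submodule `N`, regarded as a `Γ`-graded right `R`-module. -/
noncomputable def restrict (ℳ : GModData Γ R M) (N : AddSubgroup M) :
    GModData Γ R ↥N where
  smul m a := if h : ℳ.smul (↑m) a ∈ N then ⟨ℳ.smul (↑m) a, h⟩ else 0
  component := fun γ => (ℳ.component γ).addSubgroupOf N

/-- The subquotient module `P/N` (for `N ≤ P` graded submodules of `M`). -/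
noncomputable def subquot (ℳ : GModData Γ R M) (N P : AddSubgroup M) :
    GModData Γ R (↥P ⧸ N.addSubgroupOf P) :=
  (ℳ.restrict P).quot (N.addSubgroupOf P)

/-- `M(e) = ⊕_{r(γ) = e} M_γ`, for `e ∈ Γ₀`. -/
def part (ℳ : GModData Γ R M) (e : Γ) : AddSubgroup M :=
  ⨆ (f : Γ) (γ : f ⟶ e), ℳ.component γ

/-- `Γ'₀(M) = {e ∈ Γ₀ : M(e) ≠ 0}`. -/
def partSupport (ℳ : GModData Γ R M) : Set Γ := {e : Γ | ℳ.part e ≠ ⊥}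

/-- `M` is `Γ₀`-noetherian: `M(e)` is gr-noetherian for every `e ∈ Γ₀`. -/
def G0Noetherian (ℳ : GModData Γ R M) : Prop :=
  ∀ e : Γ, (ℳ.restrict (ℳ.part e)).GrNoetherian

/-- `M` is `Γ₀`-artinian: `M(e)` is gr-artinian for every `e ∈ Γ₀`. -/
def G0Artinian (ℳ : GModData Γ R M) : Prop :=
  ∀ e : Γ, (ℳ.restrict (ℳ.part e)).GrArtinian

/-- `M` is gr-simple: `M ≠ 0` and its only graded submodules are `0` and `M`. -/
def IsGrSimple (ℳ : GModData Γ R M) : Prop :=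
  (⊤ : AddSubgroup M) ≠ ⊥ ∧ ∀ N : AddSubgroup M, ℳ.IsGrSub N → N = ⊥ ∨ N = ⊤

/-- `N` is a gr-simple graded submodule of `M`. -/
def IsGrSimpleSub (ℳ : GModData Γ R M) (N : AddSubgroup M) : Prop :=
  ℳ.IsGrSub N ∧ N ≠ ⊥ ∧
    ∀ L : AddSubgroup M, ℳ.IsGrSub L → L ≤ N → L = ⊥ ∨ L = N

/-- `N` is a gr-maximal graded submodule of `M`. -/
def IsGrMaximalSub (ℳ : GModData Γ R M) (N : AddSubgroup M) : Prop :=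
  ℳ.IsGrSub N ∧ N ≠ ⊤ ∧
    ∀ L : AddSubgroup M, ℳ.IsGrSub L → N ≤ L → L = N ∨ L = ⊤

/-- The graded Jacobson radical of `M`: the intersection of all gr-maximal graded
submodules of `M` (equal to `M` when there are none). -/
def grRad (ℳ : GModData Γ R M) : AddSubgroup M := sInf {N | ℳ.IsGrMaximalSub N}

/-- The gr-socle of `M`: the sum of all gr-simple graded submodules of `M`
(equal to `0` when there are none). -/
def grSoc (ℳ : GModData Γ R M) : AddSubgroup M := sSup {N | ℳ.IsGrSimpleSub N}

/-- `N` is gr-superfluous in `M`. -/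
def GrSuperfluous (ℳ : GModData Γ R M) (N : AddSubgroup M) : Prop :=
  ∀ X : AddSubgroup M, ℳ.IsGrSub X → N ⊔ X = ⊤ → X = ⊤

/-- `N` is gr-essential in `M`. -/
def GrEssential (ℳ : GModData Γ R M) (N : AddSubgroup M) : Prop :=
  ∀ X : AddSubgroup M, ℳ.IsGrSub X → N ⊓ X = ⊥ → X = ⊥

/-- `M` is gr-semisimple: the sum of all gr-simple graded submodules is `M`. -/
def GrSemisimple (ℳ : GModData Γ R M) : Prop :=
  sSup {N : AddSubgroup M | ℳ.IsGrSimpleSub N} = ⊤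

/-- `c 0 = 0 ⊆ c 1 ⊆ ⋯ ⊆ c n = M` is a gr-composition series of `M` of length `n`. -/
def IsGrCompSeries (ℳ : GModData Γ R M) (n : ℕ) (c : ℕ → AddSubgroup M) : Prop :=
  c 0 = ⊥ ∧ c n = ⊤ ∧ (∀ i, i ≤ n → ℳ.IsGrSub (c i)) ∧
  (∀ i, i < n → c i ≤ c (i + 1)) ∧
  ∀ i, i < n → (ℳ.subquot (c i) (c (i + 1))).IsGrSimple

/-- `M` has finite gr-length: it admits a gr-composition series. -/
def FiniteGrLength (ℳ : GModData Γ R M) : Prop := ∃ n c, ℳ.IsGrCompSeries n c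

/-- `g : M → M'` is a gr-homomorphism of graded right `R`-modules. -/
def IsGrHom (ℳ : GModData Γ R M) (𝒩 : GModData Γ R M') (g : M → M') : Prop :=
  (∀ m n : M, g (m + n) = g m + g n) ∧
  (∀ (m : M) (a : R), g (ℳ.smul m a) = 𝒩.smul (g m) a) ∧
  ∀ (e f : Γ) (σ : e ⟶ f), ∀ m ∈ ℳ.component σ, g m ∈ 𝒩.component σ

/-- `M` and `M'` are gr-isomorphic (there is a bijective gr-homomorphism). -/
def GrIso (ℳ : GModData Γ R M) (𝒩 : GModData Γ R M') : Prop :=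
  ∃ g : M → M', IsGrHom ℳ 𝒩 g ∧ Function.Bijective g

/-- `g : M → M'` is a homomorphism of degree `γ` (where `γ : e ⟶ f`, i.e.
`d(γ) = e`): `g(M_σ) ⊆ M'_{γσ}` when `γσ` is defined and `g(M_σ) = 0` otherwise. -/
def IsHomOfDeg (ℳ : GModData Γ R M) (𝒩 : GModData Γ R M') {e f : Γ} (γ : e ⟶ f)
    (g : M → M') : Prop :=
  (∀ m n : M, g (m + n) = g m + g n) ∧
  (∀ (m : M) (a : R), g (ℳ.smul m a) = 𝒩.smul (g m) a) ∧
  (∀ (a : Γ) (σ : a ⟶ e), ∀ m ∈ ℳ.component σ, g m ∈ 𝒩.component (σ ≫ γ)) ∧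
  (∀ (a b : Γ) (σ : a ⟶ b), b ≠ e → ∀ m ∈ ℳ.component σ, g m = 0)

/-- `MJ`: the submodule of `M` consisting of finite sums of elements `m a`,
`m ∈ M`, `a ∈ J`. -/
def smulSet [AddCommGroup R] (ℳ : GModData Γ R M) (J : AddSubgroup R) : AddSubgroup M :=
  AddSubgroup.closure {x : M | ∃ (m : M) (a : R), a ∈ J ∧ x = ℳ.smul m a}

open scoped Classical in
/-- The direct sum `⊕_{j ∈ J} M_j` of graded right modules, with grading
`(⊕_j M_j)_γ = ⊕_j (M_j)_γ`. -/
noncomputable def dsum {J : Type u} {Mf : J → Type u} [∀ j, AddCommGroup (Mf j)]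
    (df : ∀ j, GModData Γ R (Mf j)) : GModData Γ R (Π₀ j, Mf j) where
  smul m a :=
    if h : ∃ y : Π₀ j, Mf j, ∀ j, y j = (df j).smul (m j) a then h.choose else 0
  component := fun γ => ⨅ j : J, ((df j).component γ).comap (DFinsupp.evalAddMonoidHom j)

/-- A descending chain of graded submodules is tight if
`Γ'₀(M_i/M_{i+1}) ⊇ Γ'₀(M_{i+1}/M_{i+2})` for all `i`. -/
def TightDesc (ℳ : GModData Γ R M) (c : ℕ → AddSubgroup M) : Prop :=
  (∀ i, ℳ.IsGrSub (c i)) ∧ (∀ i, c (i + 1) ≤ c i) ∧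
  ∀ i, (ℳ.subquot (c (i + 2)) (c (i + 1))).partSupport ⊆
    (ℳ.subquot (c (i + 1)) (c i)).partSupport

/-- An ascending chain of graded submodules is tight if
`Γ'₀(M_{i+1}/M_i) ⊇ Γ'₀(M_{i+2}/M_{i+1})` for all `i`. -/
def TightAsc (ℳ : GModData Γ R M) (c : ℕ → AddSubgroup M) : Prop :=
  (∀ i, ℳ.IsGrSub (c i)) ∧ (∀ i, c i ≤ c (i + 1)) ∧
  ∀ i, (ℳ.subquot (c (i + 1)) (c (i + 2))).partSupport ⊆
    (ℳ.subquot (c i) (c (i + 1))).partSupport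

/-- `M` is strongly `Γ₀`-artinian: every tight descending chain of graded
submodules stabilizes. -/
def StronglyG0Artinian (ℳ : GModData Γ R M) : Prop :=
  ∀ c : ℕ → AddSubgroup M, ℳ.TightDesc c → ∃ n, ∀ m, n ≤ m → c m = c n

/-- `M` is strongly `Γ₀`-noetherian: every tight ascending chain of graded
submodules stabilizes. -/
def StronglyG0Noetherian (ℳ : GModData Γ R M) : Prop :=
  ∀ c : ℕ → AddSubgroup M, ℳ.TightAsc c → ∃ n, ∀ m, n ≤ m → c m = c n

end GModData

/-- `E` is a gr-injective graded right `R`-module: for all graded right `R`-modules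
`M`, `N`, every injective gr-homomorphism `g : N → M` and every gr-homomorphism
`h : N → E`, there is a gr-homomorphism `h' : M → E` with `h' ∘ g = h`. -/
def GrInjective {R : Type u} [AddCommGroup R] (𝒜 : GRingData Γ R) {E : Type u}
    [AddCommGroup E] (ℰ : GModData Γ R E) : Prop :=
  ∀ (M N : Type u) [AddCommGroup M] [AddCommGroup N]
    (ℳ : GModData Γ R M) (𝒩 : GModData Γ R N),
    ℳ.IsGraded 𝒜 → 𝒩.IsGraded 𝒜 →
    ∀ g : N → M, GModData.IsGrHom 𝒩 ℳ g → Function.Injective g →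
    ∀ h : N → E, GModData.IsGrHom 𝒩 ℰ h →
    ∃ h' : M → E, GModData.IsGrHom ℳ ℰ h' ∧ ∀ y : N, h' (g y) = h y

/-- A bundled `Γ`-graded right module over the graded ring `𝒜`. -/
structure GrModule (Γ : Type u) [Groupoid.{u} Γ] {R : Type u} [AddCommGroup R]
    (𝒜 : GRingData Γ R) : Type (u + 1) where
  carrier : Type u
  [addCommGroup : AddCommGroup carrier]
  data : GModData Γ R carrier
  graded : data.IsGraded 𝒜

attribute [instance] GrModule.addCommGroup

namespace GRingData

variable {R : Type u} [AddCommGroup R]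

/-- `R` is right `Γ₀`-noetherian. -/
def RightG0Noetherian (𝒜 : GRingData Γ R) : Prop := 𝒜.toMod.G0Noetherian

/-- `R` is right `Γ₀`-artinian. -/
def RightG0Artinian (𝒜 : GRingData Γ R) : Prop := 𝒜.toMod.G0Artinian

/-- The principal right ideal `aR`. -/
def principal (𝒜 : GRingData Γ R) (a : R) : AddSubgroup R :=
  AddSubgroup.closure {x : R | ∃ b : R, x = 𝒜.mul a b}

/-- A gr-principal graded right ideal: one of the form `aR` with `a` homogeneous. -/
def IsGrPrincipal (𝒜 : GRingData Γ R) (N : AddSubgroup R) : Prop :=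
  ∃ a : R, 𝒜.toMod.IsHomogeneous a ∧ N = 𝒜.principal a

/-- `N` is a graded left ideal of `R`, i.e. a graded submodule of `_R R`. -/
def IsGrLeftIdeal (𝒜 : GRingData Γ R) (N : AddSubgroup R) : Prop :=
  (∀ m ∈ N, ∀ a : R, 𝒜.mul a m ∈ N) ∧
  ∀ n ∈ N, n ∈ AddSubgroup.closure {x : R | x ∈ N ∧ 𝒜.toMod.IsHomogeneous x}

/-- `N` is a gr-maximal graded left ideal of `R`. -/
def IsGrMaxLeftIdeal (𝒜 : GRingData Γ R) (N : AddSubgroup R) : Prop :=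
  𝒜.IsGrLeftIdeal N ∧ N ≠ ⊤ ∧
    ∀ L : AddSubgroup R, 𝒜.IsGrLeftIdeal L → N ≤ L → L = N ∨ L = ⊤

/-- The graded Jacobson radical of `R` as a left module over itself:
the intersection of all gr-maximal graded left ideals. -/
def lRad (𝒜 : GRingData Γ R) : AddSubgroup R := sInf {N | 𝒜.IsGrMaxLeftIdeal N}

/-- `N` is a graded (two-sided) ideal of `R`. -/
def IsGrIdeal (𝒜 : GRingData Γ R) (N : AddSubgroup R) : Prop :=
  𝒜.toMod.IsGrSub N ∧ ∀ m ∈ N, ∀ a : R, 𝒜.mul a m ∈ N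

/-- `N ⊆ R_e` is a left ideal of the unital ring `R_e`. -/
def IsLeftIdealIn (𝒜 : GRingData Γ R) (e : Γ) (N : Set R) : Prop :=
  N ⊆ (𝒜.component (𝟙 e) : Set R) ∧ (0 : R) ∈ N ∧
  (∀ a ∈ N, ∀ b ∈ N, a - b ∈ N) ∧
  ∀ r ∈ 𝒜.component (𝟙 e), ∀ a ∈ N, 𝒜.mul r a ∈ N

/-- `N` is a maximal left ideal of the unital ring `R_e`. -/
def IsMaxLeftIdealIn (𝒜 : GRingData Γ R) (e : Γ) (N : Set R) : Prop :=
  𝒜.IsLeftIdealIn e N ∧ N ≠ (𝒜.component (𝟙 e) : Set R) ∧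
  ∀ L : Set R, 𝒜.IsLeftIdealIn e L → N ⊆ L →
    L = N ∨ L = (𝒜.component (𝟙 e) : Set R)

/-- The Jacobson radical `rad(R_e)` of the unital ring `R_e`, as a subset of `R`:
the intersection of all maximal left ideals of `R_e`. -/
def radIn (𝒜 : GRingData Γ R) (e : Γ) : Set R :=
  (𝒜.component (𝟙 e) : Set R) ∩ ⋂₀ {N : Set R | 𝒜.IsMaxLeftIdealIn e N}

/-- The quotient graded ring `R/I` of `R` by a graded ideal `I`. -/
noncomputable def quotRing (𝒜 : GRingData Γ R) (I : AddSubgroup R) :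
    GRingData Γ (R ⧸ I) where
  mul x y := QuotientAddGroup.mk (𝒜.mul (Quotient.out x) (Quotient.out y))
  component := fun γ => (𝒜.component γ).map (QuotientAddGroup.mk' I)
  one e := QuotientAddGroup.mk (𝒜.one e)

/-- `R` is a gr-semisimple ring. -/
def GrSemisimpleRing (𝒜 : GRingData Γ R) : Prop := 𝒜.toMod.GrSemisimple

/-- `R` is gr-semilocal: the `Γ`-graded ring `R/rad^gr(R)` is gr-semisimple. -/
noncomputable def GrSemilocal (𝒜 : GRingData Γ R) : Prop :=
  ((𝒜.quotRing 𝒜.toMod.grRad).GrSemisimpleRing)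

end GRingData

/-!
Write `b = 1_f - a x`. (1 → 2): a proper graded `X` with `aR + X = R` extends, by Zorn, to a
gr-maximal submodule avoiding `a`. (2 → 3): `R = aR + bR + K` for the graded right ideal
`K = {r | 1_f r = 0}`, so `bR + K = R`; hence `1_f ∈ bR`, and the component of degree `1_f`
gives `b u = 1_f` with `u ∈ R_{1_f}`. (3 → 4): `u = 1_f - a (-x u)` is right invertible too, and
its right inverse is `b`. (3 → 5): if `m a ≠ 0` for a homogeneous `m` in a gr-simple `S`, then
`m a` generates `S`, so `m = (m a) x` with `x ∈ R_{γ⁻¹}`; then `m b = 0` and `m = m b u = 0`.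
(5 → 1): `R/N` is gr-simple for every gr-maximal `N`, and `(1_f + N) a = a + N`.
-/

namespace GModData

section

variable {R M : Type u} [AddCommGroup M] {ℳ : GModData Γ R M}

def cyclic (ℳ : GModData Γ R M) (m : M) : AddSubgroup M :=
  AddSubgroup.closure {x | ∃ r : R, x = ℳ.smul m r}

theorem cyclic_le {N : AddSubgroup M} (hN : ∀ m ∈ N, ∀ r : R, ℳ.smul m r ∈ N) {m : M}
    (hm : m ∈ N) : ℳ.cyclic m ≤ N :=
  (AddSubgroup.closure_le _).mpr fun _ ⟨r, hr⟩ => hr ▸ hN m hm r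

end

variable {R M : Type u} [AddCommGroup R] [AddCommGroup M]
variable {𝒜 : GRingData Γ R} {ℳ : GModData Γ R M}

namespace IsGraded

variable (h : ℳ.IsGraded 𝒜)
include h

def smulLeft (m : M) : R →+ M := AddMonoidHom.mk' (ℳ.smul m) (h.smul_add m)

def smulRight (r : R) : M →+ M := AddMonoidHom.mk' (ℳ.smul · r) (fun m n => h.add_smul m n r)

theorem smul_zero (m : M) : ℳ.smul m 0 = 0 := (h.smulLeft m).map_zero

theorem zero_smul (r : R) : ℳ.smul 0 r = 0 := (h.smulRight r).map_zero

theorem smul_sub (m : M) (r s : R) : ℳ.smul m (r - s) = ℳ.smul m r - ℳ.smul m s :=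
  (h.smulLeft m).map_sub r s

theorem sub_smul (m n : M) (r : R) : ℳ.smul (m - n) r = ℳ.smul m r - ℳ.smul n r :=
  (h.smulRight r).map_sub m n

theorem smul_neg (m : M) (r : R) : ℳ.smul m (-r) = -ℳ.smul m r := (h.smulLeft m).map_neg r

theorem neg_smul (m : M) (r : R) : ℳ.smul (-m) r = -ℳ.smul m r := (h.smulRight r).map_neg m

theorem induction_on {motive : M → Prop} (zero : motive 0)
    (add : ∀ x y, motive x → motive y → motive (x + y))
    (mem : ∀ {e f : Γ} (σ : e ⟶ f) x, x ∈ ℳ.component σ → motive x) (x : M) : motive x := by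
  obtain ⟨s, cf, hcf, rfl⟩ := h.decompose x
  exact Finset.sum_induction _ motive add zero fun δ hδ => mem _ _ (hcf δ hδ)

open scoped Classical in
theorem isInternal : DirectSum.IsInternal fun δ : GrIdx Γ => ℳ.component δ.2.2 := by
  refine ⟨(injective_iff_map_eq_zero _).mpr fun y hy => ?_, fun x => ?_⟩
  · rw [DirectSum.coeAddMonoidHom_eq_dfinsuppSum] at hy
    ext δ
    by_cases hδ : δ ∈ y.support
    · simpa using h.independent _ (fun δ => (y δ : M)) (fun δ _ => (y δ).2) hy δ hδ
    · simpa using hδ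
  · obtain ⟨s, cf, hcf, rfl⟩ := h.decompose x
    refine ⟨∑ δ ∈ s.attach, DirectSum.of _ δ.1 ⟨cf δ, hcf δ δ.2⟩, ?_⟩
    rw [map_sum]
    simp only [DirectSum.coeAddMonoidHom_of]
    exact Finset.sum_attach s cf

open scoped Classical in
noncomputable def proj (δ : GrIdx Γ) : M →+ M :=
  letI := h.isInternal.chooseDecomposition
  { toFun x := (DirectSum.decompose (fun δ : GrIdx Γ => ℳ.component δ.2.2) x δ : M)
    map_zero' := by simp
    map_add' x y := by simp }

theorem proj_mem (δ : GrIdx Γ) (x : M) : h.proj δ x ∈ ℳ.component δ.2.2 :=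
  Subtype.prop _

theorem proj_of_mem {e f : Γ} {σ : e ⟶ f} {x : M} (hx : x ∈ ℳ.component σ) :
    h.proj ⟨e, f, σ⟩ x = x := by
  classical
  let := h.isInternal.chooseDecomposition
  exact DirectSum.decompose_of_mem_same (fun δ : GrIdx Γ => ℳ.component δ.2.2) (i := ⟨e, f, σ⟩) hx

theorem proj_of_mem_ne {e f : Γ} {σ : e ⟶ f} {x : M} (hx : x ∈ ℳ.component σ) {δ : GrIdx Γ}
    (hδ : ⟨e, f, σ⟩ ≠ δ) : h.proj δ x = 0 := by
  classical
  let := h.isInternal.chooseDecomposition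
  exact DirectSum.decompose_of_mem_ne (fun δ : GrIdx Γ => ℳ.component δ.2.2) (i := ⟨e, f, σ⟩) hx hδ

theorem exists_eq_sum_proj (x : M) : ∃ s : Finset (GrIdx Γ), ∑ δ ∈ s, h.proj δ x = x := by
  classical
  let := h.isInternal.chooseDecomposition
  exact ⟨_, DirectSum.sum_support_decompose (fun δ : GrIdx Γ => ℳ.component δ.2.2) x⟩

theorem addMonoidHom_ext {N : Type*} [AddCommGroup N] {φ ψ : M →+ N}
    (H : ∀ {e f : Γ} (σ : e ⟶ f) x, x ∈ ℳ.component σ → φ x = ψ x) : φ = ψ :=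
  AddMonoidHom.ext <| h.induction_on (by simp) (fun x y hx hy => by simp [hx, hy]) H

theorem isHomogeneous_smul {e f g k : Γ} {σ : e ⟶ f} {τ : g ⟶ k} {m : M} {r : R}
    (hm : m ∈ ℳ.component σ) (hr : r ∈ 𝒜.component τ) : ℳ.IsHomogeneous (ℳ.smul m r) := by
  by_cases hk : k = e
  · subst hk
    exact ⟨_, _, _, h.smul_mem σ τ hm hr⟩
  · exact ⟨_, _, σ, h.smul_eq_zero σ τ hk hm hr ▸ zero_mem _⟩

theorem proj_smul (hR : 𝒜.toMod.IsGraded 𝒜) {e f g : Γ} {σ : e ⟶ f} {m : M}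
    (hm : m ∈ ℳ.component σ) (τ : g ⟶ e) (r : R) :
    h.proj ⟨g, f, τ ≫ σ⟩ (ℳ.smul m r) = ℳ.smul m (hR.proj ⟨g, e, τ⟩ r) := by
  suffices (h.proj ⟨g, f, τ ≫ σ⟩).comp (h.smulLeft m) = (h.smulLeft m).comp (hR.proj _) from
    DFunLike.congr_fun this r
  refine hR.addMonoidHom_ext fun {x y} θ r hr => ?_
  simp only [AddMonoidHom.comp_apply, smulLeft, AddMonoidHom.mk'_apply]
  by_cases hy : y = e
  · subst hy
    by_cases hθ : (⟨x, y, θ⟩ : GrIdx Γ) = ⟨g, y, τ⟩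
    · obtain ⟨rfl, hθ⟩ := Sigma.mk.inj_iff.mp hθ
      obtain rfl : θ = τ := by simpa using hθ
      rw [h.proj_of_mem (h.smul_mem σ θ hm hr), hR.proj_of_mem hr]
    · have hθσ : (⟨x, f, θ ≫ σ⟩ : GrIdx Γ) ≠ ⟨g, f, τ ≫ σ⟩ := by
        intro hc
        obtain ⟨rfl, hc⟩ := Sigma.mk.inj_iff.mp hc
        simp only [heq_eq_eq, Sigma.mk.injEq, true_and, cancel_mono] at hc
        exact hθ (by rw [hc])
      rw [h.proj_of_mem_ne (h.smul_mem σ θ hm hr) hθσ, hR.proj_of_mem_ne hr hθ, h.smul_zero]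
  · have hθ : (⟨x, y, θ⟩ : GrIdx Γ) ≠ ⟨g, e, τ⟩ := by
      rintro ⟨⟩
      exact hy rfl
    rw [h.smul_eq_zero σ θ hy hm hr, hR.proj_of_mem_ne hr hθ, map_zero, h.smul_zero]

theorem proj_mem_of_isGrSub {N : AddSubgroup M} (hN : ℳ.IsGrSub N) (δ : GrIdx Γ) {x : M}
    (hx : x ∈ N) : h.proj δ x ∈ N := by
  refine AddSubgroup.closure_induction (p := fun x _ => h.proj δ x ∈ N) ?_ (by simp)
    (fun y z _ _ hy hz => by simpa using add_mem hy hz) (fun y _ hy => by simpa using hy)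
    (hN.2 x hx)
  rintro y ⟨hyN, e, f, σ, hy⟩
  by_cases hδ : (⟨e, f, σ⟩ : GrIdx Γ) = δ
  · rwa [← hδ, h.proj_of_mem hy]
  · rw [h.proj_of_mem_ne hy hδ]
    exact zero_mem N

theorem isGrSub_iff_proj_mem {N : AddSubgroup M} :
    ℳ.IsGrSub N ↔ (∀ m ∈ N, ∀ r : R, ℳ.smul m r ∈ N) ∧ ∀ δ, ∀ x ∈ N, h.proj δ x ∈ N := by
  refine ⟨fun hN => ⟨hN.1, fun δ _ => h.proj_mem_of_isGrSub hN δ⟩,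
    fun ⟨hsmul, hproj⟩ => ⟨hsmul, ?_⟩⟩
  intro x hx
  obtain ⟨s, hs⟩ := h.exists_eq_sum_proj x
  rw [← hs]
  exact sum_mem fun δ _ => AddSubgroup.subset_closure ⟨hproj δ x hx, _, _, _, h.proj_mem δ x⟩

theorem mem_cyclic_self {e f : Γ} {σ : e ⟶ f} {m : M} (hm : m ∈ ℳ.component σ) :
    m ∈ ℳ.cyclic m :=
  AddSubgroup.subset_closure ⟨𝒜.one e, (h.smul_one σ hm).symm⟩

theorem smul_mem_cyclic {m x : M} (hx : x ∈ ℳ.cyclic m) (s : R) : ℳ.smul x s ∈ ℳ.cyclic m := by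
  refine AddSubgroup.closure_induction (p := fun x _ => ℳ.smul x s ∈ ℳ.cyclic m) ?_
    (by simp [h.zero_smul]) (fun y z _ _ hy hz => by simpa [h.add_smul] using add_mem hy hz)
    (fun y _ hy => by simpa [h.neg_smul] using neg_mem hy) hx
  rintro _ ⟨r, rfl⟩
  exact AddSubgroup.subset_closure ⟨_, (h.smul_mul m r s).symm⟩

theorem isGrSub_cyclic (hR : 𝒜.toMod.IsGraded 𝒜) {e f : Γ} {σ : e ⟶ f} {m : M}
    (hm : m ∈ ℳ.component σ) : ℳ.IsGrSub (ℳ.cyclic m) := by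
  refine ⟨fun x hx s => h.smul_mem_cyclic hx s, fun x hx => ?_⟩
  refine (AddSubgroup.closure_le _).mpr ?_ hx
  rintro _ ⟨r, rfl⟩
  induction r using hR.induction_on with
  | zero => simp [h.smul_zero]
  | add r s hr hs => simpa [h.smul_add] using add_mem hr hs
  | mem τ r hr =>
    exact AddSubgroup.subset_closure
      ⟨AddSubgroup.subset_closure ⟨r, rfl⟩, h.isHomogeneous_smul hm hr⟩

theorem exists_smul_eq_of_mem_cyclic (hR : 𝒜.toMod.IsGraded 𝒜) {e f g : Γ} {σ : e ⟶ f}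
    {m : M} (hm : m ∈ ℳ.component σ) {τ : g ⟶ e} {x : M} (hx : x ∈ ℳ.cyclic m)
    (hxτ : x ∈ ℳ.component (τ ≫ σ)) : ∃ r ∈ 𝒜.component τ, ℳ.smul m r = x := by
  have hproj : (ℳ.cyclic m).map (h.proj ⟨g, f, τ ≫ σ⟩) ≤
      (𝒜.component τ).map (h.smulLeft m) := by
    rw [cyclic, AddMonoidHom.map_closure, AddSubgroup.closure_le]
    rintro _ ⟨_, ⟨r, rfl⟩, rfl⟩
    exact ⟨hR.proj ⟨g, e, τ⟩ r, hR.proj_mem ⟨g, e, τ⟩ r, (h.proj_smul hR hm τ r).symm⟩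
  obtain ⟨r, hr, hrx⟩ := hproj ⟨x, hx, rfl⟩
  exact ⟨r, hr, hrx.trans (h.proj_of_mem hxτ)⟩

section Quotient

variable {N : AddSubgroup M}

open QuotientAddGroup

theorem quot_smul_mk (hN : ∀ m ∈ N, ∀ r : R, ℳ.smul m r ∈ N) (m : M) (r : R) :
    (ℳ.quot N).smul (m : M ⧸ N) r = (ℳ.smul m r : M ⧸ N) := by
  refine eq_iff_sub_mem.mpr ?_
  rw [← h.sub_smul]
  exact hN _ (eq_iff_sub_mem.mp (out_eq' (m : M ⧸ N))) r

theorem quot (hN : ℳ.IsGrSub N) : (ℳ.quot N).IsGraded 𝒜 where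
  add_smul x y r := by
    induction x using QuotientAddGroup.induction_on
    induction y using QuotientAddGroup.induction_on
    simp only [← mk_add, h.quot_smul_mk hN.1, h.add_smul]
  smul_add x r s := by
    induction x using QuotientAddGroup.induction_on
    simp only [h.quot_smul_mk hN.1, h.smul_add, mk_add]
  smul_mul x r s := by
    induction x using QuotientAddGroup.induction_on
    simp only [h.quot_smul_mk hN.1, h.smul_mul]
  decompose x := by
    induction x using QuotientAddGroup.induction_on with | H x =>
    obtain ⟨s, cf, hcf, rfl⟩ := h.decompose x
    exact ⟨s, fun δ => (cf δ : M ⧸ N), fun δ hδ => AddSubgroup.mem_map_of_mem _ (hcf δ hδ),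
      map_sum (mk' N) cf s⟩
  independent s cf hcf hsum δ hδ := by
    choose! x hx hxcf using fun δ hδ => AddSubgroup.mem_map.mp (hcf δ hδ)
    have hsumN : ∑ δ ∈ s, x δ ∈ N := by
      rw [← eq_zero_iff, ← mk'_apply, map_sum, ← hsum]
      exact Finset.sum_congr rfl hxcf
    have hproj : h.proj δ (∑ δ ∈ s, x δ) = x δ := by
      rw [map_sum, Finset.sum_eq_single_of_mem δ hδ fun δ' hδ' hne =>
        h.proj_of_mem_ne (hx δ' hδ') hne, h.proj_of_mem (hx δ hδ)]
    rw [← hxcf δ hδ, mk'_apply, eq_zero_iff, ← hproj]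
    exact h.proj_mem_of_isGrSub hN δ hsumN
  smul_mem σ τ x r hx hr := by
    obtain ⟨m, hm, rfl⟩ := AddSubgroup.mem_map.mp hx
    rw [mk'_apply, h.quot_smul_mk hN.1]
    exact AddSubgroup.mem_map_of_mem _ (h.smul_mem σ τ hm hr)
  smul_eq_zero σ τ x r hne hx hr := by
    obtain ⟨m, hm, rfl⟩ := AddSubgroup.mem_map.mp hx
    rw [mk'_apply, h.quot_smul_mk hN.1, h.smul_eq_zero σ τ hne hm hr, mk_zero]
  smul_one σ x hx := by
    obtain ⟨m, hm, rfl⟩ := AddSubgroup.mem_map.mp hx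
    rw [mk'_apply, h.quot_smul_mk hN.1, h.smul_one σ hm]

theorem proj_quot_mk (hN : ℳ.IsGrSub N) (δ : GrIdx Γ) (x : M) :
    (h.quot hN).proj δ (x : M ⧸ N) = (h.proj δ x : M ⧸ N) := by
  suffices ((h.quot hN).proj δ).comp (mk' N) = (mk' N).comp (h.proj δ) from
    DFunLike.congr_fun this x
  refine h.addMonoidHom_ext fun {e f} σ x hx => ?_
  have hxQ : mk' N x ∈ (ℳ.quot N).component σ := AddSubgroup.mem_map_of_mem _ hx
  simp only [AddMonoidHom.comp_apply]
  by_cases hδ : (⟨e, f, σ⟩ : GrIdx Γ) = δ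
  · subst hδ
    rw [(h.quot hN).proj_of_mem hxQ, h.proj_of_mem hx]
  · rw [(h.quot hN).proj_of_mem_ne hxQ hδ, h.proj_of_mem_ne hx hδ, map_zero]

theorem isGrSub_comap_mk (hN : ℳ.IsGrSub N) {K : AddSubgroup (M ⧸ N)}
    (hK : (ℳ.quot N).IsGrSub K) : ℳ.IsGrSub (K.comap (mk' N)) := by
  refine h.isGrSub_iff_proj_mem.mpr ⟨fun x hx r => ?_, fun δ x hx => ?_⟩
  · simpa [h.quot_smul_mk hN.1] using hK.1 _ hx r
  · simpa [← h.proj_quot_mk hN] using (h.quot hN).proj_mem_of_isGrSub hK δ hx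

theorem isGrSimple_quot (hN : ℳ.IsGrMaximalSub N) : (ℳ.quot N).IsGrSimple := by
  obtain ⟨hNgr, hNtop, hNmax⟩ := hN
  refine ⟨fun hbot => hNtop (eq_top_iff.mpr fun x _ => ?_), fun K hK => ?_⟩
  · rw [← eq_zero_iff, ← AddSubgroup.mem_bot, ← hbot]
    exact AddSubgroup.mem_top _
  · have hNK : N ≤ K.comap (mk' N) := fun x hx => by simp [(eq_zero_iff x).mpr hx]
    rw [← AddSubgroup.map_comap_eq_self_of_surjective (mk'_surjective N) K]
    rcases hNmax _ (h.isGrSub_comap_mk hNgr hK) hNK with hL | hL <;> rw [hL]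
    · exact Or.inl (map_mk'_self N)
    · exact Or.inr (AddSubgroup.map_top_of_surjective _ (mk'_surjective N))

end Quotient

theorem isGrSub_sup {X Y : AddSubgroup M} (hX : ℳ.IsGrSub X) (hY : ℳ.IsGrSub Y) :
    ℳ.IsGrSub (X ⊔ Y) := by
  rw [h.isGrSub_iff_proj_mem] at hX hY ⊢
  refine ⟨fun m hm r => ?_, fun δ m hm => ?_⟩ <;>
    obtain ⟨x, hx, y, hy, rfl⟩ := AddSubgroup.mem_sup.mp hm
  · rw [h.add_smul]
    exact add_mem (AddSubgroup.mem_sup_left (hX.1 x hx r))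
      (AddSubgroup.mem_sup_right (hY.1 y hy r))
  · rw [map_add]
    exact add_mem (AddSubgroup.mem_sup_left (hX.2 δ x hx))
      (AddSubgroup.mem_sup_right (hY.2 δ y hy))

theorem isGrSub_sSup_of_isChain {c : Set (AddSubgroup M)} (hc : ∀ N ∈ c, ℳ.IsGrSub N)
    (hchain : IsChain (· ≤ ·) c) (hne : c.Nonempty) : ℳ.IsGrSub (sSup c) := by
  have hmem (m : M) : m ∈ sSup c ↔ ∃ N ∈ c, m ∈ N :=
    AddSubgroup.mem_sSup_of_directedOn hne hchain.directedOn
  refine h.isGrSub_iff_proj_mem.mpr ⟨fun m hm r => ?_, fun δ m hm => ?_⟩ <;>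
    obtain ⟨N, hN, hmN⟩ := (hmem m).mp hm
  · exact (hmem _).mpr ⟨N, hN, (hc N hN).1 m hmN r⟩
  · exact (hmem _).mpr ⟨N, hN, h.proj_mem_of_isGrSub (hc N hN) δ hmN⟩

theorem exists_isGrMaximalSub_of_cyclic_sup_eq_top {X : AddSubgroup M} (hX : ℳ.IsGrSub X)
    (hXtop : X ≠ ⊤) {m : M} (hsup : ℳ.cyclic m ⊔ X = ⊤) :
    ∃ N, ℳ.IsGrMaximalSub N ∧ X ≤ N ∧ m ∉ N := by
  have eq_top_of_mem {L : AddSubgroup M} (hL : ℳ.IsGrSub L) (hXL : X ≤ L) (hmL : m ∈ L) :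
      L = ⊤ :=
    top_le_iff.mp (hsup ▸ sup_le (cyclic_le hL.1 hmL) hXL)
  let S : Set (AddSubgroup M) := {Y | ℳ.IsGrSub Y ∧ X ≤ Y ∧ m ∉ Y}
  have hS : ∀ c ⊆ S, IsChain (· ≤ ·) c → c.Nonempty → ∃ ub ∈ S, ∀ Y ∈ c, Y ≤ ub := by
    intro c hcS hchain hne
    refine ⟨sSup c, ⟨h.isGrSub_sSup_of_isChain (fun Y hY => (hcS hY).1) hchain hne,
      ?_, fun hm => ?_⟩, fun Y hY => le_sSup hY⟩
    · obtain ⟨Y, hY⟩ := hne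
      exact (hcS hY).2.1.trans (le_sSup hY)
    · obtain ⟨Y, hY, hmY⟩ := (AddSubgroup.mem_sSup_of_directedOn hne hchain.directedOn).mp hm
      exact (hcS hY).2.2 hmY
  have hmX : m ∉ X := fun hmX => hXtop (eq_top_of_mem hX le_rfl hmX)
  obtain ⟨N, hXN, hNmax⟩ := zorn_le_nonempty₀ S (fun c hcS hchain Y hY =>
    hS c hcS hchain ⟨Y, hY⟩) X ⟨hX, le_rfl, hmX⟩
  obtain ⟨hNgr, -, hmN⟩ := hNmax.prop
  refine ⟨N, ⟨hNgr, fun hN => hmN (hN ▸ AddSubgroup.mem_top m), fun L hL hNL => ?_⟩, hXN, hmN⟩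
  by_cases hmL : m ∈ L
  · exact Or.inr (eq_top_of_mem hL (hXN.trans hNL) hmL)
  · exact Or.inl (le_antisymm (hNmax.2 ⟨hL, hXN.trans hNL, hmL⟩ hNL) hNL)

theorem grSuperfluous_cyclic_of_mem_grRad {m : M} (hm : m ∈ ℳ.grRad) :
    ℳ.GrSuperfluous (ℳ.cyclic m) := by
  intro X hX hsup
  by_contra hXtop
  obtain ⟨N, hN, -, hmN⟩ := h.exists_isGrMaximalSub_of_cyclic_sup_eq_top hX hXtop hsup
  exact hmN (AddSubgroup.mem_sInf.mp hm N hN)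

theorem smul_eq_zero_of_isGrSimple (hR : 𝒜.toMod.IsGraded 𝒜) (hsimple : ℳ.IsGrSimple)
    {e f : Γ} {γ : e ⟶ f} {a : R} (ha : a ∈ 𝒜.component γ)
    (h3 : ∀ x ∈ 𝒜.component (Groupoid.inv γ), ∃ u ∈ 𝒜.component (𝟙 f),
      𝒜.mul (𝒜.one f - 𝒜.mul a x) u = 𝒜.one f)
    (s : M) : ℳ.smul s a = 0 := by
  induction s using h.induction_on with
  | zero => exact h.zero_smul a
  | add s t hs ht => rw [h.add_smul, hs, ht, add_zero]
  | @mem g k θ m hm =>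
    by_cases hg : g = f
    swap
    · exact h.smul_eq_zero θ γ (Ne.symm hg) hm ha
    subst hg
    by_contra hw
    have hw_mem := h.smul_mem θ γ hm ha
    have htop : ℳ.cyclic (ℳ.smul m a) = ⊤ :=
      (hsimple.2 _ (h.isGrSub_cyclic hR hw_mem)).resolve_left fun hbot =>
        hw (by simpa [hbot] using h.mem_cyclic_self hw_mem)
    obtain ⟨x, hx, hwx⟩ := h.exists_smul_eq_of_mem_cyclic hR hw_mem (τ := Groupoid.inv γ)
      (htop ▸ AddSubgroup.mem_top m) (by simpa using hm)
    obtain ⟨u, -, hbu⟩ := h3 x hx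
    have hm0 : m = 0 := calc
      m = ℳ.smul m (𝒜.one g) := (h.smul_one θ hm).symm
      _ = ℳ.smul (ℳ.smul m (𝒜.one g - 𝒜.mul a x)) u := by rw [← h.smul_mul, hbu]
      _ = 0 := by rw [h.smul_sub, h.smul_one θ hm, h.smul_mul, hwx, sub_self, h.zero_smul]
    exact hw (by rw [hm0, h.zero_smul])

end IsGraded

end GModData

namespace GRingData

variable {R : Type u} [AddCommGroup R] {𝒜 : GRingData Γ R}

@[simp]
theorem toMod_smul : 𝒜.toMod.smul = 𝒜.mul := rfl

@[simp]
theorem toMod_component {e f : Γ} (σ : e ⟶ f) : 𝒜.toMod.component σ = 𝒜.component σ := rfl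

end GRingData

namespace GRingData.IsObjectUnital

variable {R : Type u} [AddCommGroup R] {𝒜 : GRingData Γ R} (h𝒜 : 𝒜.IsObjectUnital)
include h𝒜

theorem toMod_isGraded : 𝒜.toMod.IsGraded 𝒜 where
  add_smul := h𝒜.right_distrib
  smul_add := h𝒜.left_distrib
  smul_mul a b c := (h𝒜.mul_assoc a b c).symm
  decompose := h𝒜.decompose
  independent := h𝒜.independent
  smul_mem := h𝒜.mul_mem
  smul_eq_zero := h𝒜.mul_eq_zero
  smul_one := h𝒜.mul_one

def mulLeft (c : R) : R →+ R := AddMonoidHom.mk' (𝒜.mul c) (h𝒜.left_distrib c)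

theorem mul_zero (a : R) : 𝒜.mul a 0 = 0 := h𝒜.toMod_isGraded.smul_zero a

theorem zero_mul (a : R) : 𝒜.mul 0 a = 0 := h𝒜.toMod_isGraded.zero_smul a

theorem mul_sub (a b c : R) : 𝒜.mul a (b - c) = 𝒜.mul a b - 𝒜.mul a c :=
  h𝒜.toMod_isGraded.smul_sub a b c

theorem mul_neg (a b : R) : 𝒜.mul a (-b) = -𝒜.mul a b := h𝒜.toMod_isGraded.smul_neg a b

theorem sub_mul (a b c : R) : 𝒜.mul (a - b) c = 𝒜.mul a c - 𝒜.mul b c :=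
  h𝒜.toMod_isGraded.sub_smul a b c

theorem mul_mem_component_id {e f : Γ} {γ : e ⟶ f} {a x : R} (ha : a ∈ 𝒜.component γ)
    (hx : x ∈ 𝒜.component (Groupoid.inv γ)) : 𝒜.mul a x ∈ 𝒜.component (𝟙 f) := by
  simpa using h𝒜.mul_mem γ (Groupoid.inv γ) ha hx

theorem sub_one_mul_mem_ker (f : Γ) (y : R) :
    y - 𝒜.mul (𝒜.one f) y ∈ (h𝒜.mulLeft (𝒜.one f)).ker := by
  show 𝒜.mul (𝒜.one f) _ = 0
  rw [h𝒜.mul_sub, ← h𝒜.mul_assoc, h𝒜.one_mul (𝟙 f) (h𝒜.one_mem f), sub_self]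

theorem isGrSub_ker_mulLeft_one (f : Γ) : 𝒜.toMod.IsGrSub (h𝒜.mulLeft (𝒜.one f)).ker := by
  have hR := h𝒜.toMod_isGraded
  refine ⟨fun k hk r => ?_, fun x hx => ?_⟩
  · simp only [AddMonoidHom.mem_ker, mulLeft, AddMonoidHom.mk'_apply] at hk ⊢
    rw [toMod, ← h𝒜.mul_assoc, hk, h𝒜.zero_mul]
  · suffices ∀ y, y - 𝒜.mul (𝒜.one f) y ∈ AddSubgroup.closure
        {z | z ∈ (h𝒜.mulLeft (𝒜.one f)).ker ∧ 𝒜.toMod.IsHomogeneous z} by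
      simpa [show 𝒜.mul (𝒜.one f) x = 0 from hx] using this x
    intro y
    induction y using hR.induction_on with
    | zero => simp [h𝒜.mul_zero]
    | add y z hy hz => simpa [h𝒜.left_distrib, add_sub_add_comm] using add_mem hy hz
    | @mem g k σ y hy =>
      refine AddSubgroup.subset_closure ⟨h𝒜.sub_one_mul_mem_ker f y, ?_⟩
      by_cases hk : k = f
      · subst hk
        rw [h𝒜.one_mul σ hy, sub_self]
        exact ⟨_, _, σ, zero_mem _⟩
      · rw [h𝒜.mul_eq_zero (𝟙 f) σ hk (h𝒜.one_mem f) hy, sub_zero]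
        exact ⟨_, _, σ, hy⟩

theorem mul_mem_principal (c : R) {b p : R} (hp : p ∈ 𝒜.principal b) :
    𝒜.mul c p ∈ 𝒜.principal (𝒜.mul c b) := by
  have hmap : (𝒜.principal b).map (h𝒜.mulLeft c) ≤ 𝒜.principal (𝒜.mul c b) := by
    rw [principal, AddMonoidHom.map_closure, AddSubgroup.closure_le]
    rintro _ ⟨_, ⟨r, rfl⟩, rfl⟩
    exact AddSubgroup.subset_closure ⟨r, (h𝒜.mul_assoc c b r).symm⟩
  exact hmap ⟨p, hp, rfl⟩

theorem exists_mul_eq_one_of_grSuperfluous {f : Γ} {a b : R}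
    (ha : 𝒜.toMod.GrSuperfluous (𝒜.principal a)) (hb : b ∈ 𝒜.component (𝟙 f))
    (hab : 𝒜.one f - b ∈ 𝒜.principal a) :
    ∃ u ∈ 𝒜.component (𝟙 f), 𝒜.mul b u = 𝒜.one f := by
  have hR := h𝒜.toMod_isGraded
  set K := (h𝒜.mulLeft (𝒜.one f)).ker
  have hsup : 𝒜.principal a ⊔ (𝒜.principal b ⊔ K) = ⊤ := by
    refine eq_top_iff.mpr fun y _ => ?_
    have hy : y = 𝒜.mul (𝒜.one f - b) y + (𝒜.mul b y + (y - 𝒜.mul (𝒜.one f) y)) := by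
      rw [h𝒜.sub_mul]
      abel
    rw [hy]
    exact add_mem (AddSubgroup.mem_sup_left (hR.smul_mem_cyclic hab y))
      (AddSubgroup.mem_sup_right (add_mem
        (AddSubgroup.mem_sup_left (AddSubgroup.subset_closure ⟨y, rfl⟩))
        (AddSubgroup.mem_sup_right (h𝒜.sub_one_mul_mem_ker f y))))
  have htop := ha _ (hR.isGrSub_sup (hR.isGrSub_cyclic hR hb) (h𝒜.isGrSub_ker_mulLeft_one f))
    hsup
  obtain ⟨p, hp, k, hk, hpk⟩ := AddSubgroup.mem_sup.mp (htop ▸ AddSubgroup.mem_top (𝒜.one f))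
  -- left multiplication by `1_f` kills `K` and keeps `bR`
  have hone : 𝒜.one f ∈ 𝒜.principal b := by
    have : 𝒜.one f = 𝒜.mul (𝒜.one f) p := calc
      𝒜.one f = 𝒜.mul (𝒜.one f) (p + k) := by rw [hpk, h𝒜.one_mul (𝟙 f) (h𝒜.one_mem f)]
      _ = 𝒜.mul (𝒜.one f) p := by
        rw [h𝒜.left_distrib, show 𝒜.mul (𝒜.one f) k = 0 from hk, add_zero]
    rw [this]
    simpa [h𝒜.one_mul (𝟙 f) hb] using h𝒜.mul_mem_principal (𝒜.one f) hp
  exact hR.exists_smul_eq_of_mem_cyclic hR hb (τ := 𝟙 f) hone (by simpa using h𝒜.one_mem f)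

theorem mul_eq_one_of_mul_eq_one {e f : Γ} {γ : e ⟶ f} {a : R} (ha : a ∈ 𝒜.component γ)
    (h3 : ∀ x ∈ 𝒜.component (Groupoid.inv γ), ∃ u ∈ 𝒜.component (𝟙 f),
      𝒜.mul (𝒜.one f - 𝒜.mul a x) u = 𝒜.one f)
    {x u : R} (hx : x ∈ 𝒜.component (Groupoid.inv γ)) (hu : u ∈ 𝒜.component (𝟙 f))
    (hbu : 𝒜.mul (𝒜.one f - 𝒜.mul a x) u = 𝒜.one f) :
    𝒜.mul u (𝒜.one f - 𝒜.mul a x) = 𝒜.one f := by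
  have hb : 𝒜.one f - 𝒜.mul a x ∈ 𝒜.component (𝟙 f) :=
    sub_mem (h𝒜.one_mem f) (h𝒜.mul_mem_component_id ha hx)
  have hxu : -𝒜.mul x u ∈ 𝒜.component (Groupoid.inv γ) := by
    simpa using neg_mem (h𝒜.mul_mem (Groupoid.inv γ) (𝟙 f) hx hu)
  have hu_eq : 𝒜.one f - 𝒜.mul a (-𝒜.mul x u) = u := by
    rw [h𝒜.mul_neg, sub_neg_eq_add, ← hbu, h𝒜.sub_mul, h𝒜.one_mul (𝟙 f) hu, h𝒜.mul_assoc]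
    abel
  obtain ⟨v, hv, huv⟩ := h3 _ hxu
  rw [hu_eq] at huv
  have hvb : v = 𝒜.one f - 𝒜.mul a x := calc
    v = 𝒜.mul (𝒜.mul (𝒜.one f - 𝒜.mul a x) u) v := by rw [hbu, h𝒜.one_mul (𝟙 f) hv]
    _ = 𝒜.one f - 𝒜.mul a x := by rw [h𝒜.mul_assoc, huv, h𝒜.mul_one (𝟙 f) hb]
  rw [← hvb, huv]

theorem mem_grRad_of_forall_isGrSimple_smul_eq_zero {e f : Γ} {γ : e ⟶ f} {a : R}
    (ha : a ∈ 𝒜.component γ)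
    (h5 : ∀ (S : Type u) [AddCommGroup S] (𝒮 : GModData Γ R S),
      𝒮.IsGraded 𝒜 → 𝒮.IsGrSimple → ∀ s : S, 𝒮.smul s a = 0) :
    a ∈ 𝒜.toMod.grRad := by
  have hR := h𝒜.toMod_isGraded
  refine AddSubgroup.mem_sInf.mpr fun N hN => ?_
  have h0 := h5 _ _ (hR.quot hN.1) (hR.isGrSimple_quot hN) (𝒜.one f : R ⧸ N)
  rwa [hR.quot_smul_mk hN.1.1, toMod_smul, h𝒜.one_mul γ ha,
    QuotientAddGroup.eq_zero_iff] at h0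

end GRingData.IsObjectUnital

/-- Let `R` be a `Γ`-graded ring, `γ : e ⟶ f` a morphism of
`Γ` and `a ∈ R_γ`. The following are equivalent: (1) `a ∈ rad^gr(R_R)`;
(2) `aR` is gr-superfluous in `R_R`; (3) `1_{r(γ)} - a x` is right invertible in
`R_{r(γ)}` for every `x ∈ R_{γ⁻¹}`; (4) `1_{r(γ)} - a x` is invertible in
`R_{r(γ)}` for every `x ∈ R_{γ⁻¹}`; (5) `S a = 0` for every gr-simple `Γ`-graded
right `R`-module `S`. -/
theorem mem_grRad_tfae
    {Γ : Type u} [Groupoid.{u} Γ] {R : Type u} [AddCommGroup R]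
    (𝒜 : GRingData Γ R) (h𝒜 : 𝒜.IsObjectUnital)
    {e f : Γ} (γ : e ⟶ f) (a : R) (ha : a ∈ 𝒜.component γ) :
    List.TFAE [
      a ∈ 𝒜.toMod.grRad,
      𝒜.toMod.GrSuperfluous (𝒜.principal a),
      ∀ x ∈ 𝒜.component (Groupoid.inv γ), ∃ u ∈ 𝒜.component (𝟙 f),
        𝒜.mul (𝒜.one f - 𝒜.mul a x) u = 𝒜.one f,
      ∀ x ∈ 𝒜.component (Groupoid.inv γ), ∃ u ∈ 𝒜.component (𝟙 f),
        𝒜.mul (𝒜.one f - 𝒜.mul a x) u = 𝒜.one f ∧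
        𝒜.mul u (𝒜.one f - 𝒜.mul a x) = 𝒜.one f,
      ∀ (S : Type u) [AddCommGroup S] (𝒮 : GModData Γ R S),
        𝒮.IsGraded 𝒜 → 𝒮.IsGrSimple → ∀ s : S, 𝒮.smul s a = 0 ] := by
  have hR := h𝒜.toMod_isGraded
  tfae_have 1 → 2 := hR.grSuperfluous_cyclic_of_mem_grRad
  tfae_have 2 → 3 := fun h2 x hx =>
    h𝒜.exists_mul_eq_one_of_grSuperfluous h2
      (sub_mem (h𝒜.one_mem f) (h𝒜.mul_mem_component_id ha hx))
      (by rw [sub_sub_cancel]; exact AddSubgroup.subset_closure ⟨x, rfl⟩)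
  tfae_have 3 → 4 := fun h3 x hx =>
    let ⟨u, hu, hbu⟩ := h3 x hx
    ⟨u, hu, hbu, h𝒜.mul_eq_one_of_mul_eq_one ha h3 hx hu hbu⟩
  tfae_have 4 → 3 := fun h4 x hx =>
    let ⟨u, hu, hbu, _⟩ := h4 x hx
    ⟨u, hu, hbu⟩
  tfae_have 3 → 5 := fun h3 S _ 𝒮 hS hsimple => hS.smul_eq_zero_of_isGrSimple hR hsimple ha h3
  tfae_have 5 → 1 := h𝒜.mem_grRad_of_forall_isGrSimple_smul_eq_zero ha
  tfae_finish
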